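/- An element $\sum_{I\in\mathcal{I}_{\boldsymbol{\lambda}}} v_I\otimes p_I(z)$ of the weight subspace $\mathcal{V}_{\boldsymbol{\lambda}}\subset V^{\otimes n}\otimes\mathbb{C}[z_1,\dots,z_n]$ is $S_n$-antiinvariant if and only if there is a polynomial $g$, symmetric within each block of variables, such that $p_I(z)=g(z_{I_1},\dots,z_{I_N})\cdot D/R(I)$ for every $I\in\mathcal{I}_{\boldsymbol{\lambda}}$... equivalently, the map $g\mapsto \sum_I v_I\otimes g(z_{I_1},\dots,z_{I_N})\,D/R(I)$ is a $\mathbb{C}[z]^{S_n}$-module isomorphism from $\mathbb{C}[z_1,\dots,z_n]^{S_{\lambda_1}\times\cdots\times S_{\lambda_N}}$ onto $\mathcal{V}^-_{\boldsymbol{\lambda}}$. -/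

import Mathlib

open Finset MvPolynomial

/-- `R(I)` for the decomposition encoded by `f : Fin n → Fin N`. -/
noncomputable def Rpoly (N n : ℕ) (f : Fin n → Fin N) : MvPolynomial (Fin n) ℂ :=
  ∏ p ∈ univ.filter (fun p : Fin n × Fin n => f p.1 < f p.2), (X p.2 - X p.1)

/-- `D = ∏_{i<j} (z_j - z_i)`. -/
noncomputable def Dpoly (n : ℕ) : MvPolynomial (Fin n) ℂ :=
  ∏ p ∈ univ.filter (fun p : Fin n × Fin n => p.1 < p.2), (X p.2 - X p.1)

/-!
If `p` changes sign under the transposition of `z_a` and `z_b`, then `z_b - z_a` divides `p`.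
For an antiinvariant element this applies to `p_I` whenever `a, b` lie in the same block, while
the factors `z_b - z_a` with `a, b` in different blocks divide `R(I)` up to sign. These linear
forms are pairwise non-associated primes, so `D ∣ R(I) p_I`, i.e. `p_I = g_I · D/R(I)`.
Since `D` is antiinvariant and `R(I)` is invariant under simultaneous permutation, `D/R(I)`
transforms like the coefficients themselves, so every `g_I` is a relabelling of the single
block-symmetric `g` belonging to the reference decomposition; the converse is the same
computation read backwards.
-/

namespace MvPolynomial

variable {σ R : Type*} [CommRing R]

theorem X_sub_X_ne_zero [Nontrivial R] {a b : σ} (h : a ≠ b) :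
    (X b - X a : MvPolynomial σ R) ≠ 0 :=
  sub_ne_zero.2 fun he => h (X_injective he).symm

variable [DecidableEq σ]

noncomputable def substX (a b : σ) : MvPolynomial σ R →ₐ[R] MvPolynomial σ R :=
  aeval (Function.update X a (X b))

theorem substX_X (a b i : σ) :
    substX a b (X i : MvPolynomial σ R) = if i = a then X b else X i := by
  rw [substX, aeval_X, Function.update_apply]

theorem substX_X_sub_X (a b : σ) : substX a b (X b - X a : MvPolynomial σ R) = 0 := by
  by_cases h : b = a <;> simp [substX_X, h]

theorem X_sub_X_dvd_sub_substX (a b : σ) (p : MvPolynomial σ R) :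
    X b - X a ∣ p - substX a b p := by
  induction p using MvPolynomial.induction_on with
  | C c => simp [substX]
  | add p q hp hq => simpa only [map_add, add_sub_add_comm] using dvd_add hp hq
  | mul_X p i hp =>
    have key : X b - X a ∣ X i - substX a b (X i : MvPolynomial σ R) := by
      rw [substX_X]
      split_ifs with h
      · exact ⟨-1, by rw [h]; ring⟩
      · simp
    rw [map_mul, show p * X i - substX a b p * substX a b (X i)
      = (p - substX a b p) * X i + substX a b p * (X i - substX a b (X i)) by ring]
    exact dvd_add (hp.mul_right _) (key.mul_left _)

theorem X_sub_X_dvd_iff_substX_eq_zero {a b : σ} {p : MvPolynomial σ R} :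
    X b - X a ∣ p ↔ substX a b p = 0 :=
  ⟨fun ⟨t, ht⟩ => by rw [ht, map_mul, substX_X_sub_X, zero_mul],
    fun h => by simpa [h] using X_sub_X_dvd_sub_substX a b p⟩

theorem substX_rename_swap (a b : σ) (p : MvPolynomial σ R) :
    substX a b (rename (Equiv.swap a b) p) = substX a b p := by
  rw [← AlgHom.comp_apply]
  congr 1
  refine algHom_ext fun i => ?_
  rw [AlgHom.comp_apply, rename_X, substX_X, substX_X]
  rcases eq_or_ne i a with rfl | hia
  · by_cases hba : b = i <;> simp [hba]
  · rcases eq_or_ne i b with rfl | hib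
    · simp
    · rw [Equiv.swap_apply_of_ne_of_ne hia hib]

theorem X_sub_X_dvd_of_rename_swap_eq_neg [IsDomain R] [CharZero R] {a b : σ}
    {p : MvPolynomial σ R} (hp : rename (Equiv.swap a b) p = -p) : X b - X a ∣ p := by
  rw [X_sub_X_dvd_iff_substX_eq_zero, ← CharZero.neg_eq_self_iff]
  conv_rhs => rw [← substX_rename_swap, hp, map_neg]

theorem prime_X_sub_X [IsDomain R] {a b : σ} (h : a ≠ b) :
    Prime (X b - X a : MvPolynomial σ R) := by
  refine ⟨X_sub_X_ne_zero h, fun hu => ?_, fun p q hpq => ?_⟩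
  · simpa [substX_X_sub_X] using hu.map (substX a b)
  · simp only [X_sub_X_dvd_iff_substX_eq_zero, map_mul] at hpq ⊢
    exact mul_eq_zero.1 hpq

theorem eq_and_eq_or_eq_and_eq_of_X_sub_X_dvd [Nontrivial R] {a b c d : σ} (hcd : c ≠ d)
    (h : (X b - X a : MvPolynomial σ R) ∣ X d - X c) :
    (c = a ∧ d = b) ∨ (c = b ∧ d = a) := by
  rw [X_sub_X_dvd_iff_substX_eq_zero, map_sub, sub_eq_zero, substX_X, substX_X] at h
  split_ifs at h with hda hca hca
  · exact absurd (hca.trans hda.symm) hcd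
  · exact Or.inr ⟨(X_injective h).symm, hda⟩
  · exact Or.inl ⟨hca, X_injective h⟩
  · exact absurd (X_injective h).symm hcd

end MvPolynomial

section Vandermonde

variable {n : ℕ}

theorem Dpoly_eq_det_vandermonde :
    Dpoly n = (Matrix.vandermonde (X : Fin n → MvPolynomial (Fin n) ℂ)).det := by
  rw [Matrix.det_vandermonde, Dpoly, prod_filter, Fintype.prod_prod_type]
  simp [prod_ite, filter_lt_eq_Ioi]

theorem rename_Dpoly (σ : Equiv.Perm (Fin n)) :
    rename σ (Dpoly n) = (Equiv.Perm.sign σ : ℤ) • Dpoly n := by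
  rw [Dpoly_eq_det_vandermonde, ← AlgHom.coe_toRingHom, RingHom.map_det, zsmul_eq_mul,
    ← Matrix.det_permute]
  congr 1
  ext i j
  simp [Matrix.vandermonde_apply]

theorem Dpoly_ne_zero : Dpoly n ≠ 0 := by
  rw [Dpoly_eq_det_vandermonde, Ne, Matrix.det_vandermonde_eq_zero_iff]
  rintro ⟨i, j, h, hij⟩
  exact hij (X_injective h)

theorem Rpoly_ne_zero {N : ℕ} (f : Fin n → Fin N) : Rpoly N n f ≠ 0 :=
  prod_ne_zero_iff.2 fun _ hp => X_sub_X_ne_zero fun h => (mem_filter.1 hp).2.ne (congrArg f h)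

theorem rename_Rpoly {N : ℕ} (σ : Equiv.Perm (Fin n)) (f : Fin n → Fin N) :
    rename σ (Rpoly N n (f ∘ σ)) = Rpoly N n f := by
  rw [Rpoly, map_prod, Rpoly]
  exact prod_nbij' (fun p => (σ p.1, σ p.2)) (fun p => (σ⁻¹ p.1, σ⁻¹ p.2))
    (by simp) (by simp) (by simp) (by simp) (by simp)

theorem X_sub_X_dvd_Rpoly {N : ℕ} {f : Fin n → Fin N} {a b : Fin n} (h : f a < f b) :
    X b - X a ∣ Rpoly N n f := by
  have hab : (a, b) ∈ univ.filter (fun p : Fin n × Fin n => f p.1 < f p.2) := by simpa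
  have := dvd_prod_of_mem (fun p : Fin n × Fin n => (X p.2 - X p.1 : MvPolynomial (Fin n) ℂ)) hab
  exact this

theorem Dpoly_dvd_Rpoly_mul {N : ℕ} (f : Fin n → Fin N) {p : MvPolynomial (Fin n) ℂ}
    (hp : ∀ a b, a ≠ b → f a = f b → rename (Equiv.swap a b) p = -p) :
    Dpoly n ∣ Rpoly N n f * p := by
  refine prod_dvd_of_isRelPrime ?_ fun ⟨a, b⟩ hab => ?_
  · rintro ⟨a, b⟩ hab ⟨c, d⟩ hcd hne
    simp only [coe_filter, mem_univ, true_and, Set.mem_ofPred_eq] at hab hcd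
    refine (prime_X_sub_X hab.ne).irreducible.isRelPrime_iff_not_dvd.2 fun h => ?_
    rcases eq_and_eq_or_eq_and_eq_of_X_sub_X_dvd hcd.ne h with ⟨rfl, rfl⟩ | ⟨rfl, rfl⟩
    · exact hne rfl
    · exact lt_asymm hab hcd
  replace hab : a < b := (mem_filter.1 hab).2
  rcases lt_trichotomy (f a) (f b) with h | h | h
  · exact dvd_mul_of_dvd_left (X_sub_X_dvd_Rpoly h) _
  · exact dvd_mul_of_dvd_right (X_sub_X_dvd_of_rename_swap_eq_neg (hp a b hab.ne h)) _
  · exact dvd_mul_of_dvd_left (by simpa using (X_sub_X_dvd_Rpoly h).neg_left) _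

theorem rename_eq_sign_smul_of_Rpoly_mul_eq_Dpoly {N : ℕ} (σ : Equiv.Perm (Fin n))
    (f : Fin n → Fin N) {q q' : MvPolynomial (Fin n) ℂ} (hq : Rpoly N n f * q = Dpoly n)
    (hq' : Rpoly N n (f ∘ σ) * q' = Dpoly n) :
    rename σ q' = (Equiv.Perm.sign σ : ℤ) • q := by
  have h := congrArg (rename σ) hq'
  rw [map_mul, rename_Rpoly, rename_Dpoly, ← hq, ← mul_smul_comm] at h
  exact mul_left_cancel₀ (Rpoly_ne_zero f) h

end Vandermonde

theorem exists_perm_comp_eq_of_card_fiber_eq {α β : Type*} [Fintype α] [DecidableEq β]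
    {f g : α → β}
    (h : ∀ j, #{a | f a = j} = #{a | g a = j}) : ∃ τ : Equiv.Perm α, f ∘ τ = g := by
  have e : ∀ j, {a // g a = j} ≃ {a // f a = j} := fun j =>
    Fintype.equivOfCardEq (by simp only [Fintype.card_subtype, h])
  refine ⟨(Equiv.sigmaFiberEquiv g).symm.trans
    ((Equiv.sigmaCongrRight e).trans (Equiv.sigmaFiberEquiv f)), funext fun a => ?_⟩
  exact (e (g a) ⟨a, rfl⟩).2

theorem card_filter_comp_perm {α β : Type*} [Fintype α] [DecidableEq β] (f : α → β)
    (σ : Equiv.Perm α) (j : β) : #{a | f (σ a) = j} = #{a | f a = j} :=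
  card_bij' (fun a _ => σ a) (fun b _ => σ⁻¹ b) (by simp) (by simp) (by simp) (by simp)

theorem sign_smul_sign_smul {α M : Type*} [Fintype α] [DecidableEq α] [AddCommGroup M]
    (σ : Equiv.Perm α) (y : M) :
    (Equiv.Perm.sign σ : ℤ) • (Equiv.Perm.sign σ : ℤ) • y = y := by
  rw [smul_smul, ← Units.val_mul, Int.units_mul_self, Units.val_one, one_smul]

section Antiinvariance

variable {N n : ℕ}

def HasFiberCards (lam : Fin N → ℕ) (f : Fin n → Fin N) : Prop :=
  ∀ j, #{a | f a = j} = lam j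

theorem hasFiberCards_comp_perm_iff {lam : Fin N → ℕ} {f : Fin n → Fin N}
    (σ : Equiv.Perm (Fin n)) : HasFiberCards lam (f ∘ σ) ↔ HasFiberCards lam f := by
  simp only [HasFiberCards, Function.comp_apply, card_filter_comp_perm]

theorem rename_comp_perm_eq_sign_smul {lam : Fin N → ℕ}
    {Q : (Fin n → Fin N) → MvPolynomial (Fin n) ℂ}
    (hQ : ∀ f, HasFiberCards lam f → Rpoly N n f * Q f = Dpoly n) {f : Fin n → Fin N}
    (hf : HasFiberCards lam f) (σ : Equiv.Perm (Fin n)) :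
    rename σ (Q (f ∘ σ)) = (Equiv.Perm.sign σ : ℤ) • Q f :=
  rename_eq_sign_smul_of_Rpoly_mul_eq_Dpoly σ f (hQ f hf)
    (hQ _ ((hasFiberCards_comp_perm_iff σ).2 hf))

/-- `x f` is the coefficient `p_I` of `v_I`, where `I_j = f⁻¹ j`; a permutation acts on the
tensor factors and on the variables simultaneously. -/
def IsAntiinvariant (x : (Fin n → Fin N) → MvPolynomial (Fin n) ℂ) : Prop :=
  ∀ (σ : Equiv.Perm (Fin n)) f, rename σ (x (f ∘ σ)) = (Equiv.Perm.sign σ : ℤ) • x f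

namespace IsAntiinvariant

variable {x : (Fin n → Fin N) → MvPolynomial (Fin n) ℂ}

theorem rename_swap (hx : IsAntiinvariant x) {f : Fin n → Fin N} {a b : Fin n} (hab : a ≠ b)
    (h : f a = f b) : rename (Equiv.swap a b) (x f) = -x f := by
  have hswap : f ∘ Equiv.swap a b = f := by simp [Equiv.comp_swap_eq_update, h]
  simpa [hswap, Equiv.Perm.sign_swap hab] using hx (Equiv.swap a b) f

theorem dvd (hx : IsAntiinvariant x) {f : Fin n → Fin N} {q : MvPolynomial (Fin n) ℂ}
    (hq : Rpoly N n f * q = Dpoly n) : q ∣ x f := by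
  obtain ⟨g, hg⟩ := Dpoly_dvd_Rpoly_mul f fun a b hab h => hx.rename_swap hab h
  refine ⟨g, mul_left_cancel₀ (Rpoly_ne_zero f) ?_⟩
  rw [hg, ← hq, mul_assoc]

theorem eq_rename_mul (hx : IsAntiinvariant x) {lam : Fin N → ℕ}
    {Q : (Fin n → Fin N) → MvPolynomial (Fin n) ℂ}
    (hQ : ∀ f, HasFiberCards lam f → Rpoly N n f * Q f = Dpoly n) {blk f : Fin n → Fin N}
    (hblk : HasFiberCards lam blk) {g : MvPolynomial (Fin n) ℂ} (hg : x blk = Q blk * g)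
    {τ : Equiv.Perm (Fin n)} (hfτ : f ∘ τ = blk) : x f = rename τ g * Q f := by
  have hf : HasFiberCards lam f := (hasFiberCards_comp_perm_iff τ).1 (hfτ ▸ hblk)
  calc x f = (Equiv.Perm.sign τ : ℤ) • (Equiv.Perm.sign τ : ℤ) • x f :=
        (sign_smul_sign_smul τ _).symm
    _ = (Equiv.Perm.sign τ : ℤ) • ((Equiv.Perm.sign τ : ℤ) • Q f * rename τ g) := by
        rw [← hx, hfτ, hg, map_mul, ← hfτ, rename_comp_perm_eq_sign_smul hQ hf]
    _ = rename τ g * Q f := by rw [smul_mul_assoc, sign_smul_sign_smul, mul_comm]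

end IsAntiinvariant

theorem isAntiinvariant_of_eq_rename_mul {lam : Fin N → ℕ}
    {Q x : (Fin n → Fin N) → MvPolynomial (Fin n) ℂ}
    (hQ : ∀ f, HasFiberCards lam f → Rpoly N n f * Q f = Dpoly n)
    (hsupp : ∀ f, ¬ HasFiberCards lam f → x f = 0) {blk : Fin n → Fin N}
    (hblk : HasFiberCards lam blk) {g : MvPolynomial (Fin n) ℂ}
    (hx : ∀ f (τ : Equiv.Perm (Fin n)), (∀ a, f (τ a) = blk a) → x f = rename τ g * Q f) :
    IsAntiinvariant x := by
  intro σ f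
  by_cases hf : HasFiberCards lam f
  · obtain ⟨τ, hτ⟩ :=
      exists_perm_comp_eq_of_card_fiber_eq fun j => (hf j).trans (hblk j).symm
    have hστ : ∀ a, (f ∘ σ) ((σ⁻¹ * τ) a) = blk a := by simp [← hτ]
    rw [hx (f ∘ σ) _ hστ, hx f τ (congrFun hτ), map_mul, rename_rename,
      rename_comp_perm_eq_sign_smul hQ hf, mul_smul_comm]
    congr 3
    ext a
    simp
  · rw [hsupp f hf, hsupp _ (mt (hasFiberCards_comp_perm_iff σ).1 hf), map_zero, smul_zero]

end Antiinvariance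

theorem stmt19_general (N n : ℕ) (lam : Fin N → ℕ)
    (blk : Fin n → Fin N)
    (hblk : ∀ j, (univ.filter fun a => blk a = j).card = lam j)
    (Q : (Fin n → Fin N) → MvPolynomial (Fin n) ℂ)
    (hQ : ∀ f : Fin n → Fin N, (∀ j, (univ.filter fun a => f a = j).card = lam j) →
      Rpoly N n f * Q f = Dpoly n)
    (x : (Fin n → Fin N) → MvPolynomial (Fin n) ℂ)
    (hsupp : ∀ f : Fin n → Fin N,
      ¬ (∀ j, (univ.filter fun a => f a = j).card = lam j) → x f = 0) :
    (∀ σ : Equiv.Perm (Fin n),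
        (fun f => rename σ (x (f ∘ σ))) = fun f => (Equiv.Perm.sign σ : ℤ) • x f) ↔
      ∃ g : MvPolynomial (Fin n) ℂ,
        (∀ σ : Equiv.Perm (Fin n), (∀ a, blk (σ a) = blk a) → rename σ g = g) ∧
        ∀ (f : Fin n → Fin N) (τ : Equiv.Perm (Fin n)),
          (∀ a, f (τ a) = blk a) → x f = rename τ g * Q f := by
  refine ⟨fun hanti => ?_, fun ⟨g, _, hx⟩ σ =>
    funext (isAntiinvariant_of_eq_rename_mul hQ hsupp hblk hx σ)⟩
  replace hanti : IsAntiinvariant x := fun σ f => congrFun (hanti σ) f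
  obtain ⟨g, hg⟩ := hanti.dvd (hQ blk hblk)
  have hx (f : Fin n → Fin N) (τ : Equiv.Perm (Fin n)) (hfτ : ∀ a, f (τ a) = blk a) :
      x f = rename τ g * Q f :=
    hanti.eq_rename_mul hQ hblk hg (funext hfτ)
  refine ⟨g, fun σ hσ => ?_, hx⟩
  have hQblk : Q blk ≠ 0 := right_ne_zero_of_mul (hQ blk hblk ▸ Dpoly_ne_zero)
  exact mul_right_cancel₀ hQblk ((hx blk σ hσ).symm.trans (hg.trans (mul_comm _ _)))

/-- An element `∑_{I ∈ I_λ} v_I ⊗ p_I(z)` of the weight subspace `𝒱_λ` (encoded as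
`x : (Fin n → Fin N) → ℂ[z]` supported on decompositions with fiber sizes `λ`) is
`S_n`-antiinvariant if and only if there is a polynomial `g`, symmetric within the
blocks of the reference decomposition `blk`, with `p_I = g(z_{I_1},…,z_{I_N})·D/R(I)`,
i.e. `x f = (rename τ g) · Q f` for any permutation `τ` matching `blk` with `f`, where
`Q f = D / R(I)` (specified by `R(I)·Q(I) = D`).  Equivalently,
`g ↦ ∑_I v_I ⊗ g(z_{I_1},…,z_{I_N}) D/R(I)` is a `ℂ[z]^{S_n}`-module isomorphism from
the block-symmetric polynomials onto `𝒱⁻_λ`. -/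
theorem stmt19 (N n : ℕ) (lam : Fin N → ℕ) (hsum : ∑ i, lam i = n)
    (blk : Fin n → Fin N)
    (hblk : ∀ j, (univ.filter fun a => blk a = j).card = lam j)
    (Q : (Fin n → Fin N) → MvPolynomial (Fin n) ℂ)
    (hQ : ∀ f : Fin n → Fin N, (∀ j, (univ.filter fun a => f a = j).card = lam j) →
      Rpoly N n f * Q f = Dpoly n)
    (x : (Fin n → Fin N) → MvPolynomial (Fin n) ℂ)
    (hsupp : ∀ f : Fin n → Fin N,
      ¬ (∀ j, (univ.filter fun a => f a = j).card = lam j) → x f = 0) :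
    (∀ σ : Equiv.Perm (Fin n),
        (fun f => rename σ (x (f ∘ σ))) = fun f => (Equiv.Perm.sign σ : ℤ) • x f) ↔
      ∃ g : MvPolynomial (Fin n) ℂ,
        (∀ σ : Equiv.Perm (Fin n), (∀ a, blk (σ a) = blk a) → rename σ g = g) ∧
        ∀ (f : Fin n → Fin N) (τ : Equiv.Perm (Fin n)),
          (∀ a, f (τ a) = blk a) → x f = rename τ g * Q f :=
  stmt19_general N n lam blk hblk Q hQ x hsupp
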